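/- arXiv:solv-int/9706001 — 9 statements merged into one kernel-verified Lean document; each statement's English description precedes it below -/
import Mathlib

section
/- Let A be an m×n matrix over a field K, G a generalized inverse of A, and P₁ = G·A. If there exists an m×n matrix X with Aᵀ·X − Xᵀ·A = B (where B is n×n), then necessarily (C1) Bᵀ = −B and (C2) (1 − P₁ᵀ)·B·(1 − P₁) = 0. -/
open Matrix

/-- If the matrix equation `Aᵀ * X - Xᵀ * A = B` admits a solution `X`, then necessarily
(C1) `Bᵀ = -B` and (C2) `(1 - P₁ᵀ) * B * (1 - P₁) = 0`, where `P₁ = G * A` for any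
generalized inverse `G` of `A`. -/
theorem matrix_equation_necessary_conditions {K : Type*} [Field K] {m n : ℕ}
    (A : Matrix (Fin m) (Fin n) K) (G : Matrix (Fin n) (Fin m) K)
    (hAGA : A * G * A = A) (hGAG : G * A * G = G)
    (B : Matrix (Fin n) (Fin n) K) (X : Matrix (Fin m) (Fin n) K)
    (hX : Aᵀ * X - Xᵀ * A = B) :
    Bᵀ = -B ∧ (1 - (G * A)ᵀ) * B * (1 - G * A) = 0 := by
  subst hX
  constructor
  · simp [transpose_sub, transpose_mul]
  · have h2 : A * (1 - G * A) = 0 := by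
      rw [Matrix.mul_sub, Matrix.mul_one, ← Matrix.mul_assoc, hAGA, sub_self]
    have h1 : (1 - (G * A)ᵀ) * Aᵀ = 0 := by
      have := congrArg Matrix.transpose h2
      simpa [transpose_sub, transpose_mul] using this
    have t1 : (1 - (G * A)ᵀ) * (Aᵀ * X) = 0 := by
      rw [← Matrix.mul_assoc, h1, Matrix.zero_mul]
    have t2 : Xᵀ * A * (1 - G * A) = 0 := by
      rw [Matrix.mul_assoc, h2, Matrix.mul_zero]
    rw [Matrix.mul_sub (1 - (G * A)ᵀ) (Aᵀ * X) (Xᵀ * A),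
      Matrix.sub_mul ((1 - (G * A)ᵀ) * (Aᵀ * X)) ((1 - (G * A)ᵀ) * (Xᵀ * A)),
      t1, Matrix.zero_mul,
      Matrix.mul_assoc ((1:Matrix (Fin n) (Fin n) K) - (G * A)ᵀ), t2, Matrix.mul_zero]
    simp
end

section
/- Let A be an m×n matrix over a field K of characteristic ≠ 2, G a generalized inverse of A, P₁ = G·A and P₂ = A·G. Suppose the n×n matrix B satisfies (C1) Bᵀ = −B and (C2) (1 − P₁ᵀ)·B·(1 − P₁) = 0. Then for every m×n matrix Y and every m×m matrix Z such that P₂ᵀ·Z·P₂ is symmetric, the matrix X = (1/2)·Gᵀ·B·P₁ + Gᵀ·B·(1 − P₁) + (1 − P₂ᵀ)·Y + (P₂ᵀ·Z·P₂)·A satisfies Aᵀ·X − Xᵀ·A = B. -/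
open Matrix

/-- Sufficiency: over a field of characteristic ≠ 2, if `Bᵀ = -B` and
`(1 - P₁ᵀ) * B * (1 - P₁) = 0`, then for any `Y` and any `Z` with `P₂ᵀ * Z * P₂` symmetric,
`X = (1/2) • Gᵀ * B * P₁ + Gᵀ * B * (1 - P₁) + (1 - P₂ᵀ) * Y + (P₂ᵀ * Z * P₂) * A`
solves `Aᵀ * X - Xᵀ * A = B`. Here `P₁ = G * A` and `P₂ = A * G` for a generalized
inverse `G` of `A`. -/
theorem matrix_equation_general_solution_solves {K : Type*} [Field K]
    (hchar : ringChar K ≠ 2) {m n : ℕ}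
    (A : Matrix (Fin m) (Fin n) K) (G : Matrix (Fin n) (Fin m) K)
    (hAGA : A * G * A = A) (hGAG : G * A * G = G)
    (B : Matrix (Fin n) (Fin n) K)
    (hC1 : Bᵀ = -B)
    (hC2 : (1 - (G * A)ᵀ) * B * (1 - G * A) = 0)
    (Y : Matrix (Fin m) (Fin n) K) (Z : Matrix (Fin m) (Fin m) K)
    (hZ : ((A * G)ᵀ * Z * (A * G))ᵀ = (A * G)ᵀ * Z * (A * G))
    (X : Matrix (Fin m) (Fin n) K)
    (hXdef : X = (2 : K)⁻¹ • (Gᵀ * B * (G * A)) + Gᵀ * B * (1 - G * A)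
        + (1 - (A * G)ᵀ) * Y + ((A * G)ᵀ * Z * (A * G)) * A) :
    Aᵀ * X - Xᵀ * A = B := by
  have h2 : (2:K) ≠ 0 := Ring.two_ne_zero hchar
  have hhalf : (2:K)⁻¹ + (2:K)⁻¹ = 1 := by field_simp; norm_num
  have hT : Aᵀ * (Gᵀ * Aᵀ) = Aᵀ := by
    simpa [Matrix.transpose_mul, Matrix.mul_assoc] using congrArg transpose hAGA
  have hT' : ∀ (p : ℕ) (W : Matrix (Fin m) (Fin p) K),
      Aᵀ * (Gᵀ * (Aᵀ * W)) = Aᵀ * W := by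
    intro p W
    rw [← Matrix.mul_assoc Gᵀ Aᵀ W, ← Matrix.mul_assoc Aᵀ (Gᵀ * Aᵀ) W, hT]
  have hAGA1 : A * (G * A) = A := by rw [← Matrix.mul_assoc, hAGA]
  have hZ2 : (A * G)ᵀ * Zᵀ * (A * G) = (A * G)ᵀ * Z * (A * G) := by
    simpa [Matrix.transpose_mul, Matrix.mul_assoc] using hZ
  have hZA : Aᵀ * (Zᵀ * A) = Aᵀ * (Z * A) := by
    have := congrArg (fun M => Aᵀ * M * A) hZ2
    simpa [Matrix.transpose_mul, Matrix.mul_assoc, hAGA1, hT'] using this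
  have hB : Aᵀ * (Gᵀ * B) + B * (G * A) - Aᵀ * (Gᵀ * (B * (G * A))) = B := by
    have h := hC2
    simp only [Matrix.sub_mul, Matrix.mul_sub, Matrix.one_mul, Matrix.mul_one,
      Matrix.transpose_mul, Matrix.mul_assoc, sub_eq_zero] at h
    linear_combination (norm := abel) -h
  subst hXdef
  simp only [Matrix.mul_add, Matrix.add_mul, Matrix.mul_sub, Matrix.sub_mul,
    Matrix.mul_one, Matrix.one_mul, Matrix.mul_smul, Matrix.smul_mul,
    transpose_add, transpose_sub, transpose_smul, transpose_mul, transpose_one,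
    transpose_transpose, Matrix.mul_assoc, hC1, hAGA1, hT', hZA,
    Matrix.neg_mul, Matrix.mul_neg, smul_neg]
  have hQ : (2:K)⁻¹ • (Aᵀ * (Gᵀ * (B * (G * A)))) + (2:K)⁻¹ • (Aᵀ * (Gᵀ * (B * (G * A))))
      = Aᵀ * (Gᵀ * (B * (G * A))) := by rw [← add_smul, hhalf, one_smul]
  linear_combination (norm := abel) hQ + hB
end

section
/- Let A be an m×n matrix over a field K of characteristic ≠ 2, G a generalized inverse of A, P₁ = G·A and P₂ = A·G, and suppose the n×n matrix B satisfies Bᵀ = −B and (1 − P₁ᵀ)·B·(1 − P₁) = 0. Then every m×n matrix X satisfying Aᵀ·X − Xᵀ·A = B can be written in the form X = (1/2)·Gᵀ·B·P₁ + Gᵀ·B·(1 − P₁) + (1 − P₂ᵀ)·Y + (P₂ᵀ·Z·P₂)·A for some m×n matrix Y and some m×m matrix Z with P₂ᵀ·Z·P₂ symmetric. -/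
open Matrix

/-- Completeness of the general solution: over a field of characteristic ≠ 2, if
`Bᵀ = -B` and `(1 - P₁ᵀ) * B * (1 - P₁) = 0`, then every solution `X` of
`Aᵀ * X - Xᵀ * A = B` can be written as
`X = (1/2) • Gᵀ * B * P₁ + Gᵀ * B * (1 - P₁) + (1 - P₂ᵀ) * Y + (P₂ᵀ * Z * P₂) * A`
for some `Y` and some `Z` with `P₂ᵀ * Z * P₂` symmetric. Here `P₁ = G * A`,
`P₂ = A * G` for a generalized inverse `G` of `A`. -/
theorem matrix_equation_solution_is_of_general_form {K : Type*} [Field K]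
    (hchar : ringChar K ≠ 2) {m n : ℕ}
    (A : Matrix (Fin m) (Fin n) K) (G : Matrix (Fin n) (Fin m) K)
    (hAGA : A * G * A = A) (hGAG : G * A * G = G)
    (B : Matrix (Fin n) (Fin n) K)
    (hC1 : Bᵀ = -B)
    (hC2 : (1 - (G * A)ᵀ) * B * (1 - G * A) = 0)
    (X : Matrix (Fin m) (Fin n) K)
    (hX : Aᵀ * X - Xᵀ * A = B) :
    ∃ (Y : Matrix (Fin m) (Fin n) K) (Z : Matrix (Fin m) (Fin m) K),
      ((A * G)ᵀ * Z * (A * G))ᵀ = (A * G)ᵀ * Z * (A * G) ∧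
      X = (2 : K)⁻¹ • (Gᵀ * B * (G * A)) + Gᵀ * B * (1 - G * A)
          + (1 - (A * G)ᵀ) * Y + ((A * G)ᵀ * Z * (A * G)) * A := by
  have h2 : (2 : K) ≠ 0 := Ring.two_ne_zero hchar
  have hhalf1 : (2 : K)⁻¹ + (2 : K)⁻¹ = 1 := by
    rw [← two_mul, mul_inv_cancel₀ h2]
  have h1 : Gᵀ * Aᵀ * Gᵀ = Gᵀ := by
    rw [Matrix.mul_assoc, ← Matrix.transpose_mul, ← Matrix.transpose_mul, hGAG]
  have hAGA' : A * (G * A) = A := by rw [← Matrix.mul_assoc, hAGA]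
  have hX' : Aᵀ * X = B + Xᵀ * A := eq_add_of_sub_eq hX
  set Z : Matrix (Fin m) (Fin m) K := (2 : K)⁻¹ • (Gᵀ * B * G) + Gᵀ * Xᵀ with hZ
  have hS : (A * G)ᵀ * Z * (A * G) = (2 : K)⁻¹ • (Gᵀ * B * G) + Gᵀ * Xᵀ * (A * G) := by
    rw [hZ, Matrix.transpose_mul]
    rw [Matrix.mul_add, Matrix.add_mul]
    congr 1
    · rw [Matrix.mul_smul, Matrix.smul_mul]
      congr 1
      calc Gᵀ * Aᵀ * (Gᵀ * B * G) * (A * G)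
          = (Gᵀ * Aᵀ * Gᵀ) * B * (G * (A * G)) := by
            simp only [Matrix.mul_assoc]
        _ = Gᵀ * B * G := by rw [h1, ← Matrix.mul_assoc G A G, hGAG]
    · calc Gᵀ * Aᵀ * (Gᵀ * Xᵀ) * (A * G)
          = (Gᵀ * Aᵀ * Gᵀ) * Xᵀ * (A * G) := by simp only [Matrix.mul_assoc]
        _ = Gᵀ * Xᵀ * (A * G) := by rw [h1]
  have key : Gᵀ * (Aᵀ * X) = Gᵀ * B + Gᵀ * (Xᵀ * A) := by
    rw [hX', Matrix.mul_add]
  refine ⟨X, Z, ?_, ?_⟩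
  · rw [hS]
    simp only [transpose_add, transpose_smul, Matrix.transpose_mul, transpose_transpose, hC1,
      Matrix.neg_mul, Matrix.mul_neg, smul_neg, Matrix.mul_assoc]
    have keyG : Gᵀ * (Aᵀ * (X * G)) = Gᵀ * (B * G) + Gᵀ * (Xᵀ * (A * G)) := by
      have : Aᵀ * (X * G) = B * G + Xᵀ * (A * G) := by
        rw [← Matrix.mul_assoc, hX', Matrix.add_mul, Matrix.mul_assoc]
      rw [this, Matrix.mul_add]
    rw [keyG]
    match_scalars <;> first | ring1 | linear_combination -hhalf1
  · rw [hS]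
    simp only [Matrix.mul_sub, Matrix.sub_mul, Matrix.mul_one, Matrix.one_mul,
      Matrix.add_mul, Matrix.smul_mul, Matrix.transpose_mul, Matrix.mul_assoc, hAGA']
    rw [key]
    match_scalars <;> first | ring1 | linear_combination -hhalf1
end

section
/- Let u and v be n×r matrices and Λ an invertible n×n matrix over a field K. Then the rank of the (r+n)×(r+n) block matrix [[0, uᵀ],[v, Λ]] equals n + rank(uᵀ·Λ⁻¹·v). -/
open Matrix

section Aux

variable {K : Type*} [Field K]

/-- The product submodule is linearly equivalent to the product of submodules. -/
noncomputable def prodSubmoduleEquiv {V W : Type*} [AddCommGroup V] [AddCommGroup W]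
    [Module K V] [Module K W] (p : Submodule K V) (q : Submodule K W) :
    (p.prod q) ≃ₗ[K] p × q where
  toFun x := (⟨x.1.1, x.2.1⟩, ⟨x.1.2, x.2.2⟩)
  invFun x := ⟨(x.1.1, x.2.1), ⟨x.1.2, x.2.2⟩⟩
  map_add' _ _ := rfl
  map_smul' _ _ := rfl
  left_inv _ := rfl
  right_inv _ := rfl

lemma finrank_submodule_prod {V W : Type*} [AddCommGroup V] [AddCommGroup W]
    [Module K V] [Module K W] [FiniteDimensional K V] [FiniteDimensional K W]
    (p : Submodule K V) (q : Submodule K W) :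
    Module.finrank K (p.prod q) = Module.finrank K p + Module.finrank K q := by
  rw [(prodSubmoduleEquiv p q).finrank_eq, Module.finrank_prod]

lemma range_prodMap' {V W V' W' : Type*} [AddCommGroup V] [AddCommGroup W]
    [AddCommGroup V'] [AddCommGroup W'] [Module K V] [Module K W] [Module K V'] [Module K W']
    (f : V →ₗ[K] W) (g : V' →ₗ[K] W') :
    LinearMap.range (f.prodMap g) = (LinearMap.range f).prod (LinearMap.range g) := by
  ext ⟨a, b⟩
  constructor
  · rintro ⟨⟨x, y⟩, h⟩
    exact ⟨⟨x, congrArg Prod.fst h⟩, ⟨y, congrArg Prod.snd h⟩⟩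
  · rintro ⟨⟨x, hx⟩, ⟨y, hy⟩⟩
    exact ⟨(x, y), Prod.ext hx hy⟩

lemma rank_fromBlocks_diag {m n p q : Type*} [Fintype m] [Fintype n] [Fintype p] [Fintype q]
    (A : Matrix m n K) (D : Matrix p q K) :
    (fromBlocks A 0 0 D).rank = A.rank + D.rank := by
  have h : (fromBlocks A 0 0 D).mulVecLin =
      ((LinearEquiv.sumArrowLequivProdArrow m p K K).symm.toLinearMap.comp
        (A.mulVecLin.prodMap D.mulVecLin)).comp
        (LinearEquiv.sumArrowLequivProdArrow n q K K).toLinearMap := by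
    apply LinearMap.ext
    intro x
    have hx : x = Sum.elim (x ∘ Sum.inl) (x ∘ Sum.inr) := by
      funext j; cases j <;> rfl
    conv_lhs => rw [mulVecLin_apply, hx, fromBlocks_mulVec]
    funext i
    cases i with
    | inl i =>
      simp [LinearEquiv.sumArrowLequivProdArrow, mulVec, dotProduct]
    | inr i =>
      simp [LinearEquiv.sumArrowLequivProdArrow, mulVec, dotProduct]
  rw [Matrix.rank, h, LinearMap.range_comp, LinearEquiv.range, Submodule.map_top,
    LinearMap.range_comp, LinearEquiv.finrank_map_eq, range_prodMap',
    finrank_submodule_prod, Matrix.rank, Matrix.rank]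

lemma rank_neg' {m n : Type*} [Fintype n] (A : Matrix m n K) : (-A).rank = A.rank := by
  have h : (-A).mulVecLin = (-LinearMap.id : (m → K) →ₗ[K] (m → K)).comp A.mulVecLin := by
    apply LinearMap.ext
    intro x
    simp [mulVecLin_apply, neg_mulVec]
  rw [Matrix.rank, h, LinearMap.range_comp, Matrix.rank]
  have : Submodule.map (-LinearMap.id : (m → K) →ₗ[K] (m → K)) (LinearMap.range A.mulVecLin)
      = LinearMap.range A.mulVecLin := by
    ext y
    simp only [Submodule.mem_map]
    constructor
    · rintro ⟨z, hz, rfl⟩; simpa using (LinearMap.range A.mulVecLin).neg_mem hz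
    · intro hy; exact ⟨-y, (LinearMap.range A.mulVecLin).neg_mem hy, by simp⟩
  rw [this]

end Aux

/-- For `Λ` invertible, the rank of the block matrix `[[0, uᵀ],[v, Λ]]` equals
`n + rank (uᵀ * Λ⁻¹ * v)`. -/
theorem rank_block_matrix {K : Type*} [Field K] {r n : ℕ}
    (u v : Matrix (Fin n) (Fin r) K) (Λ : Matrix (Fin n) (Fin n) K)
    (hΛ : IsUnit Λ.det) :
    (Matrix.fromBlocks 0 uᵀ v Λ).rank = n + (uᵀ * Λ⁻¹ * v).rank := by
  letI := Λ.invertibleOfIsUnitDet hΛ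
  have key := Matrix.fromBlocks_eq_of_invertible₂₂ (0 : Matrix (Fin r) (Fin r) K) uᵀ v Λ
  have hL : IsUnit (fromBlocks (1 : Matrix (Fin r) (Fin r) K) (uᵀ * ⅟Λ) 0 1).det := by
    rw [det_fromBlocks_zero₂₁]; simp
  have hR : IsUnit (fromBlocks (1 : Matrix (Fin r) (Fin r) K) 0 (⅟Λ * v) 1).det := by
    rw [det_fromBlocks_zero₁₂]; simp
  rw [key, rank_mul_eq_left_of_isUnit_det _ _ hR, rank_mul_eq_right_of_isUnit_det _ _ hL,
    rank_fromBlocks_diag]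
  have hneg : (0 - uᵀ * ⅟Λ * v) = -(uᵀ * Λ⁻¹ * v) := by
    rw [Matrix.invOf_eq_nonsing_inv, zero_sub]
  rw [hneg, rank_neg', Λ.rank_of_isUnit ((Matrix.isUnit_iff_isUnit_det Λ).mpr hΛ),
    Fintype.card_fin, add_comm]
end

section
/- Let u and v be n×r matrices and Λ an invertible n×n matrix over a field K. If the rank of the (r+n)×(r+n) block matrix [[0, uᵀ],[v, Λ]] is at most n, then uᵀ·Λ⁻¹·v = 0. -/
open Matrix

/-- Rank of an arbitrary submatrix is at most the rank of the matrix. -/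
lemma rank_submatrix_le_general {K : Type*} [Field K] {l m o p : Type*}
    [Fintype l] [Fintype m] [Fintype o] [Fintype p] [DecidableEq m] [DecidableEq o]
    (A : Matrix m o K) (f : l → m) (g : p → o) :
    (A.submatrix f g).rank ≤ A.rank := by
  have h1 : A * ((1 : Matrix o o K).submatrix (Equiv.refl o) g) = A.submatrix id g := by
    rw [Matrix.mul_submatrix_one]
    rfl
  have h2 : ((1 : Matrix m m K).submatrix f (Equiv.refl m)) * (A.submatrix id g)
      = A.submatrix f g := by
    rw [Matrix.one_submatrix_mul]
    rfl
  calc (A.submatrix f g).rank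
      = (((1 : Matrix m m K).submatrix f (Equiv.refl m)) * (A * ((1 : Matrix o o K).submatrix (Equiv.refl o) g))).rank := by
        rw [h1, h2]
    _ ≤ (A * ((1 : Matrix o o K).submatrix (Equiv.refl o) g)).rank := Matrix.rank_mul_le_right _ _
    _ ≤ A.rank := Matrix.rank_mul_le_left _ _

/-- For `Λ` invertible, if the rank of the block matrix `[[0, uᵀ],[v, Λ]]` is at most `n`,
then `uᵀ * Λ⁻¹ * v = 0`. -/
theorem rank_le_implies_schur_zero {K : Type*} [Field K] {r n : ℕ}
    (u v : Matrix (Fin n) (Fin r) K) (Λ : Matrix (Fin n) (Fin n) K)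
    (hΛ : IsUnit Λ.det)
    (hrank : (Matrix.fromBlocks 0 uᵀ v Λ).rank ≤ n) :
    uᵀ * Λ⁻¹ * v = 0 := by
  letI := Λ.invertibleOfIsUnitDet hΛ
  set S : Matrix (Fin r) (Fin r) K := (0 : Matrix (Fin r) (Fin r) K) - uᵀ * ⅟Λ * v with hS
  set P : Matrix (Fin r ⊕ Fin n) (Fin r ⊕ Fin n) K := fromBlocks 1 (uᵀ * ⅟Λ) 0 1 with hP
  set Q : Matrix (Fin r ⊕ Fin n) (Fin r ⊕ Fin n) K := fromBlocks 1 0 (⅟Λ * v) 1 with hQ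
  set N : Matrix (Fin r ⊕ Fin n) (Fin r ⊕ Fin n) K := fromBlocks S 0 0 Λ with hN
  have hfac : fromBlocks (0 : Matrix (Fin r) (Fin r) K) uᵀ v Λ = P * N * Q :=
    Matrix.fromBlocks_eq_of_invertible₂₂ 0 uᵀ v Λ
  letI : Invertible (1 : Matrix (Fin r) (Fin r) K) := invertibleOne
  letI : Invertible (1 : Matrix (Fin n) (Fin n) K) := invertibleOne
  letI : Invertible P := Matrix.fromBlocksZero₂₁Invertible 1 (uᵀ * ⅟Λ) 1
  letI : Invertible Q := Matrix.fromBlocksZero₁₂Invertible 1 (⅟Λ * v) 1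
  have hNeq : N = ⅟P * (fromBlocks (0 : Matrix (Fin r) (Fin r) K) uᵀ v Λ * ⅟Q) := by
    rw [hfac]
    rw [Matrix.mul_assoc, Matrix.mul_assoc, mul_invOf_self, Matrix.mul_one,
      ← Matrix.mul_assoc, invOf_mul_self, Matrix.one_mul]
  have hrankN : N.rank ≤ n := by
    calc N.rank = (⅟P * (fromBlocks (0 : Matrix (Fin r) (Fin r) K) uᵀ v Λ * ⅟Q)).rank := by
          rw [← hNeq]
      _ ≤ (fromBlocks (0 : Matrix (Fin r) (Fin r) K) uᵀ v Λ * ⅟Q).rank :=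
          Matrix.rank_mul_le_right _ _
      _ ≤ (fromBlocks (0 : Matrix (Fin r) (Fin r) K) uᵀ v Λ).rank :=
          Matrix.rank_mul_le_left _ _
      _ ≤ n := hrank
  have hSzero : S = 0 := by
    ext i j
    by_contra hij
    -- consider the (n+1) × (n+1) submatrix
    set f : Fin 1 ⊕ Fin n → Fin r ⊕ Fin n := Sum.elim (fun _ => Sum.inl i) Sum.inr with hf
    set g : Fin 1 ⊕ Fin n → Fin r ⊕ Fin n := Sum.elim (fun _ => Sum.inl j) Sum.inr with hg
    have hB : N.submatrix f g =
        fromBlocks (Matrix.of fun _ _ => S i j) 0 0 Λ := by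
      ext a b
      cases a <;> cases b <;> simp [hN, hf, hg, Matrix.fromBlocks, Matrix.submatrix]
    have hdet : IsUnit (N.submatrix f g).det := by
      rw [hB, Matrix.det_fromBlocks_zero₂₁]
      have h1 : (Matrix.of fun (_ : Fin 1) (_ : Fin 1) => S i j).det = S i j := by
        simp [Matrix.det_fin_one]
      rw [h1]
      exact (isUnit_iff_ne_zero.mpr hij).mul hΛ
    have hrk : (N.submatrix f g).rank = n + 1 := by
      rw [Matrix.rank_of_isUnit _ ((Matrix.isUnit_iff_isUnit_det _).mpr hdet)]
      simp [Fintype.card_sum, Nat.add_comm]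
    have := rank_submatrix_le_general N f g
    omega
  rw [← Matrix.invOf_eq_nonsing_inv]
  have hneg : -(uᵀ * ⅟Λ * v) = 0 := by rw [← zero_sub]; exact hSzero
  exact neg_eq_zero.mp hneg
end

section
/- Let u and v be n×r matrices and Λ an invertible n×n matrix over a field K such that uᵀ·Λ⁻¹·v = 0. Then the (r+n)×(r+n) block matrix G = [[0, 0],[0, Λ⁻¹]] is a generalized inverse of the block matrix A = [[0, uᵀ],[v, Λ]]; that is, A·G·A = A and G·A·G = G. -/
open Matrix

/-- For `Λ` invertible with `uᵀ * Λ⁻¹ * v = 0`, the block matrix `G = [[0, 0],[0, Λ⁻¹]]`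
is a generalized inverse of `A = [[0, uᵀ],[v, Λ]]`: `A * G * A = A` and `G * A * G = G`. -/
theorem block_generalized_inverse {K : Type*} [Field K] {r n : ℕ}
    (u v : Matrix (Fin n) (Fin r) K) (Λ : Matrix (Fin n) (Fin n) K)
    (hΛ : IsUnit Λ.det) (huv : uᵀ * Λ⁻¹ * v = 0)
    (A G : Matrix (Fin r ⊕ Fin n) (Fin r ⊕ Fin n) K)
    (hA : A = Matrix.fromBlocks 0 uᵀ v Λ)
    (hG : G = Matrix.fromBlocks 0 0 0 Λ⁻¹) :
    A * G * A = A ∧ G * A * G = G := by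
  subst hA hG
  have h1 : Λ⁻¹ * Λ = 1 := Matrix.nonsing_inv_mul Λ hΛ
  have h2 : Λ * Λ⁻¹ = 1 := Matrix.mul_nonsing_inv Λ hΛ
  have huv' : uᵀ * (Λ⁻¹ * v) = 0 := by rw [← Matrix.mul_assoc]; exact huv
  constructor <;>
    simp [Matrix.fromBlocks_multiply, Matrix.mul_assoc, h1, h2, huv']
end

section
/- Let U be a set of spectral parameters, and for each u ∈ U let A(u) be an m×n matrix over a field K of characteristic ≠ 2 with a generalized inverse G(u); set P₁(u) = G(u)·A(u) and P₂(u) = A(u)·G(u), and let B(u,v) be an n×n matrix for each pair (u,v). Then there exists a family X(u,v) of m×n matrices satisfying A(u)ᵀ·X(u,v) − X(v,u)ᵀ·A(v) = B(u,v) for all u, v ∈ U if and only if (C1′) B(u,v)ᵀ = −B(v,u) for all u, v and (C2′) (1 − P₁(u)ᵀ)·B(u,v)·(1 − P₁(v)) = 0 for all u, v; in which case, for any family Y(u,v) of m×n matrices and any family Z(u,v) of m×m matrices satisfying (P₂(u)ᵀ·Z(u,v)·P₂(v))ᵀ = P₂(v)ᵀ·Z(v,u)·P₂(u) for all u, v,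 the family X(u,v) = (1/2)·G(u)ᵀ·B(u,v)·P₁(v) + G(u)ᵀ·B(u,v)·(1 − P₁(v)) + (1 − P₂(u)ᵀ)·Y(u,v) + (P₂(u)ᵀ·Z(u,v)·P₂(v))·A(v) is a solution. -/
open Matrix

/-- Spectral-parameter version: a family `X u v` solving
`(A u)ᵀ * X u v - (X v u)ᵀ * A v = B u v` for all `u, v` exists iff
(C1′) `(B u v)ᵀ = -(B v u)` and (C2′) `(1 - (P₁ u)ᵀ) * B u v * (1 - P₁ v) = 0` hold for all
`u, v`; and in that case, for any families `Y`, `Z` with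
`((P₂ u)ᵀ * Z u v * P₂ v)ᵀ = (P₂ v)ᵀ * Z v u * P₂ u`, the displayed family is a solution.
Here `P₁ u = G u * A u`, `P₂ u = A u * G u`. -/
theorem spectral_matrix_equation {K : Type*} [Field K] (hchar : ringChar K ≠ 2)
    {m n : ℕ} {U : Type*}
    (A : U → Matrix (Fin m) (Fin n) K) (G : U → Matrix (Fin n) (Fin m) K)
    (hAGA : ∀ u, A u * G u * A u = A u) (hGAG : ∀ u, G u * A u * G u = G u)
    (B : U → U → Matrix (Fin n) (Fin n) K) :
    ((∃ X : U → U → Matrix (Fin m) (Fin n) K,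
        ∀ u v, (A u)ᵀ * X u v - (X v u)ᵀ * A v = B u v) ↔
      ((∀ u v, (B u v)ᵀ = -(B v u)) ∧
        (∀ u v, (1 - (G u * A u)ᵀ) * B u v * (1 - G v * A v) = 0)))
    ∧
    ((∀ u v, (B u v)ᵀ = -(B v u)) →
      (∀ u v, (1 - (G u * A u)ᵀ) * B u v * (1 - G v * A v) = 0) →
      ∀ (Y : U → U → Matrix (Fin m) (Fin n) K) (Z : U → U → Matrix (Fin m) (Fin m) K),
        (∀ u v, ((A u * G u)ᵀ * Z u v * (A v * G v))ᵀ
            = (A v * G v)ᵀ * Z v u * (A u * G u)) →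
        ∀ u v,
          (A u)ᵀ *
              ((2 : K)⁻¹ • ((G u)ᵀ * B u v * (G v * A v)) + (G u)ᵀ * B u v * (1 - G v * A v)
                + (1 - (A u * G u)ᵀ) * Y u v + ((A u * G u)ᵀ * Z u v * (A v * G v)) * A v)
            - ((2 : K)⁻¹ • ((G v)ᵀ * B v u * (G u * A u)) + (G v)ᵀ * B v u * (1 - G u * A u)
                + (1 - (A v * G v)ᵀ) * Y v u + ((A v * G v)ᵀ * Z v u * (A u * G u)) * A u)ᵀ
              * A v
          = B u v) := by
  have h2 : (2:K) ≠ 0 := Ring.two_ne_zero hchar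
  have hhalf : (2:K)⁻¹ + (2:K)⁻¹ = (1:K) := by
    rw [← two_mul, mul_inv_cancel₀ h2]
  have habsT : ∀ u, (A u)ᵀ * (G u)ᵀ * (A u)ᵀ = (A u)ᵀ := fun u => by
    rw [Matrix.mul_assoc, ← transpose_mul, ← transpose_mul, hAGA]
  have hL : ∀ u, (A u)ᵀ * (A u * G u)ᵀ = (A u)ᵀ := fun u => by
    rw [transpose_mul, ← Matrix.mul_assoc, habsT]
  have main : (∀ u v, (B u v)ᵀ = -(B v u)) →
      (∀ u v, (1 - (G u * A u)ᵀ) * B u v * (1 - G v * A v) = 0) →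
      ∀ (Y : U → U → Matrix (Fin m) (Fin n) K) (Z : U → U → Matrix (Fin m) (Fin m) K),
        (∀ u v, ((A u * G u)ᵀ * Z u v * (A v * G v))ᵀ
            = (A v * G v)ᵀ * Z v u * (A u * G u)) →
        ∀ u v,
          (A u)ᵀ *
              ((2 : K)⁻¹ • ((G u)ᵀ * B u v * (G v * A v)) + (G u)ᵀ * B u v * (1 - G v * A v)
                + (1 - (A u * G u)ᵀ) * Y u v + ((A u * G u)ᵀ * Z u v * (A v * G v)) * A v)
            - ((2 : K)⁻¹ • ((G v)ᵀ * B v u * (G u * A u)) + (G v)ᵀ * B v u * (1 - G u * A u)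
                + (1 - (A v * G v)ᵀ) * Y v u + ((A v * G v)ᵀ * Z v u * (A u * G u)) * A u)ᵀ
              * A v
          = B u v := by
    intro hC1 hC2 Y Z hZ u v
    have hkey : (G u * A u)ᵀ * B u v + B u v * (G v * A v)
        - (G u * A u)ᵀ * (B u v * (G v * A v)) = B u v := by
      have h' : B u v - B u v * (G v * A v) - (G u * A u)ᵀ * B u v
          + (G u * A u)ᵀ * (B u v * (G v * A v)) = 0 := by
        rw [← hC2 u v]
        simp only [Matrix.sub_mul, Matrix.mul_sub, Matrix.one_mul, Matrix.mul_one,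
          Matrix.mul_assoc]
        abel
      rw [← sub_eq_zero]
      have h'' : (G u * A u)ᵀ * B u v + B u v * (G v * A v)
          - (G u * A u)ᵀ * (B u v * (G v * A v)) - B u v
          = -(B u v - B u v * (G v * A v) - (G u * A u)ᵀ * B u v
            + (G u * A u)ᵀ * (B u v * (G v * A v))) := by abel
      rw [h'', h', neg_zero]
    have L1 : (A u)ᵀ * ((2:K)⁻¹ • ((G u)ᵀ * B u v * (G v * A v)))
        = (2:K)⁻¹ • ((G u * A u)ᵀ * (B u v * (G v * A v))) := by
      rw [Matrix.mul_smul]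
      simp only [transpose_mul, Matrix.mul_assoc]
    have L2 : (A u)ᵀ * ((G u)ᵀ * B u v * (1 - G v * A v))
        = (G u * A u)ᵀ * B u v - (G u * A u)ᵀ * (B u v * (G v * A v)) := by
      simp only [Matrix.mul_sub, Matrix.mul_one, transpose_mul, Matrix.mul_assoc]
    have L3 : (A u)ᵀ * ((1 - (A u * G u)ᵀ) * Y u v) = 0 := by
      have e : (A u)ᵀ * (1 - (A u * G u)ᵀ) = 0 := by
        rw [Matrix.mul_sub, Matrix.mul_one, transpose_mul, ← Matrix.mul_assoc, habsT, sub_self]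
      rw [← Matrix.mul_assoc, e, Matrix.zero_mul]
    have L4 : (A u)ᵀ * ((A u * G u)ᵀ * Z u v * (A v * G v) * A v)
        = (A u)ᵀ * (Z u v * A v) := by
      have e : (A u * G u)ᵀ * Z u v * (A v * G v) * A v
          = (A u * G u)ᵀ * (Z u v * A v) := by
        rw [Matrix.mul_assoc ((A u * G u)ᵀ * Z u v), hAGA, Matrix.mul_assoc]
      rw [e, ← Matrix.mul_assoc, hL]
    have R1 : ((2:K)⁻¹ • ((G v)ᵀ * B v u * (G u * A u)))ᵀ * A v
        = -((2:K)⁻¹ • ((G u * A u)ᵀ * (B u v * (G v * A v)))) := by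
      simp only [transpose_smul, transpose_mul, transpose_transpose, Matrix.smul_mul,
        hC1 v u, Matrix.mul_neg, Matrix.neg_mul, smul_neg, Matrix.mul_assoc]
    have R2 : ((G v)ᵀ * B v u * (1 - G u * A u))ᵀ * A v
        = -(B u v * (G v * A v) - (G u * A u)ᵀ * (B u v * (G v * A v))) := by
      rw [transpose_mul, transpose_mul, transpose_transpose, hC1 v u, transpose_sub,
        transpose_one]
      simp only [Matrix.mul_neg, Matrix.neg_mul, Matrix.sub_mul, Matrix.one_mul,
        Matrix.mul_assoc, neg_sub]
    have R3 : ((1 - (A v * G v)ᵀ) * Y v u)ᵀ * A v = 0 := by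
      have e : (1 - A v * G v) * A v = 0 := by
        rw [Matrix.sub_mul, Matrix.one_mul, hAGA, sub_self]
      rw [transpose_mul, transpose_sub, transpose_one, transpose_transpose,
        Matrix.mul_assoc, e, Matrix.mul_zero]
    have R4 : ((A v * G v)ᵀ * Z v u * (A u * G u) * A u)ᵀ * A v
        = (A u)ᵀ * (Z u v * A v) := by
      rw [transpose_mul, hZ v u, Matrix.mul_assoc ((A u * G u)ᵀ) (Z u v) (A v * G v),
        ← Matrix.mul_assoc ((A u)ᵀ) ((A u * G u)ᵀ) (Z u v * (A v * G v)), hL,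
        Matrix.mul_assoc ((A u)ᵀ) (Z u v * (A v * G v)) (A v),
        Matrix.mul_assoc (Z u v) (A v * G v) (A v), hAGA]
    rw [transpose_add, transpose_add, transpose_add]
    simp only [Matrix.mul_add, Matrix.add_mul]
    rw [L1, L2, L3, L4, R1, R2, R3, R4]
    set W : Matrix (Fin n) (Fin n) K := (G u * A u)ᵀ * (B u v * (G v * A v)) with hWdef
    set X1 : Matrix (Fin n) (Fin n) K := (G u * A u)ᵀ * B u v with hX1def
    set X2 : Matrix (Fin n) (Fin n) K := B u v * (G v * A v) with hX2def
    set AZ : Matrix (Fin n) (Fin n) K := (A u)ᵀ * (Z u v * A v) with hAZdef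
    set s : Matrix (Fin n) (Fin n) K := (2:K)⁻¹ • W with hsdef
    have hsum : s + s = W := by
      rw [hsdef, ← add_smul, hhalf, one_smul]
    rw [← hkey, ← hsum]
    abel
  refine ⟨⟨?_, ?_⟩, main⟩
  · rintro ⟨X, hX⟩
    refine ⟨fun u v => ?_, fun u v => ?_⟩
    · rw [← hX u v, transpose_sub, transpose_mul, transpose_mul]
      simp only [transpose_transpose]
      rw [← hX v u, neg_sub]
    · have e1 : (1 - (G u * A u)ᵀ) * (A u)ᵀ = 0 := by
        rw [Matrix.sub_mul, Matrix.one_mul, transpose_mul, habsT, sub_self]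
      have e2 : A v * (1 - G v * A v) = 0 := by
        rw [Matrix.mul_sub, Matrix.mul_one, ← Matrix.mul_assoc, hAGA, sub_self]
      have t1 : (1 - (G u * A u)ᵀ) * ((A u)ᵀ * X u v) = 0 := by
        rw [← Matrix.mul_assoc, e1, Matrix.zero_mul]
      have t2 : (X v u)ᵀ * A v * (1 - G v * A v) = 0 := by
        rw [Matrix.mul_assoc, e2, Matrix.mul_zero]
      rw [← hX u v, Matrix.mul_sub (1 - (G u * A u)ᵀ), Matrix.sub_mul, t1,
        Matrix.zero_mul, Matrix.mul_assoc (1 - (G u * A u)ᵀ), t2, Matrix.mul_zero,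
        zero_sub, neg_zero]
  · rintro ⟨hC1, hC2⟩
    exact ⟨fun u v =>
      (2 : K)⁻¹ • ((G u)ᵀ * B u v * (G v * A v)) + (G u)ᵀ * B u v * (1 - G v * A v)
        + (1 - (A u * G u)ᵀ) * (0 : Matrix (Fin m) (Fin n) K)
        + ((A u * G u)ᵀ * (0 : Matrix (Fin m) (Fin m) K) * (A v * G v)) * A v,
      fun u v => main hC1 hC2 (fun _ _ => (0 : Matrix (Fin m) (Fin n) K))
        (fun _ _ => (0 : Matrix (Fin m) (Fin m) K)) (fun a b => by simp) u v⟩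
end

section
/- Let L, R, S be N×N matrices over a commutative ring and let a, b be natural numbers. Then the trace of (L^a ⊗ L^b) · ( [R, L ⊗ 1] − [S, 1 ⊗ L] ) is zero, where ⊗ denotes the Kronecker product, 1 the N×N identity matrix, and [X, Y] = X·Y − Y·X the matrix commutator. In particular, if R is an R-matrix for L, i.e. {L ⊗, L} := [R, L ⊗ 1] − [Rᵀ, 1 ⊗ L], then the traces Tr(L^k) Poisson-commute. -/
open Matrix Kronecker

lemma trace_mul_commutator_zero {α : Type*} [CommRing α] {n : Type*} [Fintype n]
    [DecidableEq n] (A B X : Matrix n n α) (h : A * B = B * A) :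
    Matrix.trace (A * (X * B - B * X)) = 0 := by
  rw [Matrix.mul_sub, Matrix.trace_sub, ← mul_assoc, Matrix.trace_mul_comm (A * X) B,
    ← mul_assoc, ← h, mul_assoc]
  ring

/-- The trace identity underlying the R-matrix formalism: for any `N × N` matrices `L`, `R`,
`S` over a commutative ring and any naturals `a`, `b`,
`Tr((L^a ⊗ L^b) * ([R, L ⊗ 1] - [S, 1 ⊗ L])) = 0`,
where `⊗` is the Kronecker product and `[X, Y] = X * Y - Y * X`. -/
theorem trace_kronecker_commutator_zero {α : Type*} [CommRing α] {N : ℕ}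
    (L : Matrix (Fin N) (Fin N) α)
    (R S : Matrix (Fin N × Fin N) (Fin N × Fin N) α) (a b : ℕ) :
    Matrix.trace (((L ^ a) ⊗ₖ (L ^ b)) *
      ((R * (L ⊗ₖ (1 : Matrix (Fin N) (Fin N) α))
          - (L ⊗ₖ (1 : Matrix (Fin N) (Fin N) α)) * R)
        - (S * ((1 : Matrix (Fin N) (Fin N) α) ⊗ₖ L)
          - ((1 : Matrix (Fin N) (Fin N) α) ⊗ₖ L) * S))) = 0 := by
  rw [Matrix.mul_sub, Matrix.trace_sub,
    trace_mul_commutator_zero _ _ R (by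
      rw [← Matrix.mul_kronecker_mul, ← Matrix.mul_kronecker_mul, mul_one, one_mul,
        ← pow_succ, ← pow_succ']),
    trace_mul_commutator_zero _ _ S (by
      rw [← Matrix.mul_kronecker_mul, ← Matrix.mul_kronecker_mul, mul_one, one_mul,
        ← pow_succ, ← pow_succ']),
    sub_zero]
end

section
/- Let u and v be n×r matrices and Λ an invertible n×n matrix over a field K of characteristic ≠ 2, with uᵀ·Λ⁻¹·v = 0. Set A = −[[0, vᵀ],[u, Λᵀ]] (so Aᵀ = −[[0, uᵀ],[v, Λ]]). Let B = [[ζ, −μᵀ],[μ, φ]] with ζᵀ = −ζ (r×r), μ n×r, and φᵀ = −φ (n×n), and assume ζ + μᵀ·(Λᵀ)⁻¹·u − uᵀ·Λ⁻¹·μ + uᵀ·Λ⁻¹·φ·(Λᵀ)⁻¹·u = 0. Then for every r×r matrix p, every r×n matrix q and every symmetric n×n matrix F, the block matrix R = [[0, 0],[−Λ⁻¹·μ + (1/2)·Λ⁻¹·φ·(Λᵀ)⁻¹·u, −(1/2)·Λ⁻¹·φ]] + [[p, q],[−Λ⁻¹·v·p − F·u, −Λ⁻¹·v·q − F·Λᵀ]]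 satisfies Aᵀ·R − Rᵀ·A = B. -/
open Matrix

/-- The block form of the general R-matrix: with `A = -[[0, vᵀ],[u, Λᵀ]]`,
`B = [[ζ, -μᵀ],[μ, φ]]` antisymmetric satisfying the consistency condition (C2), every
matrix of the form
`R = [[0, 0],[-Λ⁻¹μ + (1/2)Λ⁻¹φ(Λᵀ)⁻¹u, -(1/2)Λ⁻¹φ]] + [[p, q],[-Λ⁻¹vp - Fu, -Λ⁻¹vq - FΛᵀ]]`
with `p`, `q` arbitrary and `F` symmetric, satisfies `Aᵀ * R - Rᵀ * A = B`. -/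
theorem r_matrix_block_solution {K : Type*} [Field K] (hchar : ringChar K ≠ 2) {r n : ℕ}
    (u v : Matrix (Fin n) (Fin r) K) (Λ : Matrix (Fin n) (Fin n) K)
    (hΛ : IsUnit Λ.det) (huv : uᵀ * Λ⁻¹ * v = 0)
    (A : Matrix (Fin r ⊕ Fin n) (Fin r ⊕ Fin n) K)
    (hA : A = -(Matrix.fromBlocks 0 vᵀ u Λᵀ))
    (ζ : Matrix (Fin r) (Fin r) K) (μ : Matrix (Fin n) (Fin r) K)
    (φ : Matrix (Fin n) (Fin n) K)
    (hζ : ζᵀ = -ζ) (hφ : φᵀ = -φ)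
    (hC2 : ζ + μᵀ * (Λᵀ)⁻¹ * u - uᵀ * Λ⁻¹ * μ + uᵀ * Λ⁻¹ * φ * (Λᵀ)⁻¹ * u = 0)
    (B : Matrix (Fin r ⊕ Fin n) (Fin r ⊕ Fin n) K)
    (hB : B = Matrix.fromBlocks ζ (-μᵀ) μ φ)
    (p : Matrix (Fin r) (Fin r) K) (q : Matrix (Fin r) (Fin n) K)
    (F : Matrix (Fin n) (Fin n) K) (hF : Fᵀ = F)
    (R : Matrix (Fin r ⊕ Fin n) (Fin r ⊕ Fin n) K)
    (hR : R = Matrix.fromBlocks 0 0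
          (-(Λ⁻¹ * μ) + (2 : K)⁻¹ • (Λ⁻¹ * φ * (Λᵀ)⁻¹ * u)) (-((2 : K)⁻¹ • (Λ⁻¹ * φ)))
        + Matrix.fromBlocks p q
          (-(Λ⁻¹ * v * p) - F * u) (-(Λ⁻¹ * v * q) - F * Λᵀ)) :
    Aᵀ * R - Rᵀ * A = B := by
  have h2 : (2:K) ≠ 0 := Ring.two_ne_zero hchar
  have hΛi : Λ * Λ⁻¹ = 1 := Matrix.mul_nonsing_inv Λ hΛ
  have hΛt : (Λ⁻¹)ᵀ = (Λᵀ)⁻¹ := Matrix.transpose_nonsing_inv Λ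
  have hΛti : Λᵀ * (Λᵀ)⁻¹ = 1 := by
    rw [← hΛt, ← Matrix.transpose_mul, Matrix.nonsing_inv_mul Λ hΛ, Matrix.transpose_one]
  subst hA hB hR
  rw [sub_eq_add_neg]
  simp only [Matrix.transpose_neg, Matrix.transpose_add, Matrix.fromBlocks_transpose,
    Matrix.transpose_transpose, Matrix.transpose_zero, Matrix.fromBlocks_add,
    Matrix.neg_mul, Matrix.mul_neg, neg_neg, Matrix.fromBlocks_multiply, Matrix.fromBlocks_neg]
  have hΛtt : ((Λᵀ)⁻¹)ᵀ = Λ⁻¹ := by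
    rw [Matrix.transpose_nonsing_inv, Matrix.transpose_transpose]
  have hiΛ : Λ⁻¹ * Λ = 1 := Matrix.nonsing_inv_mul Λ hΛ
  have hitΛ : (Λᵀ)⁻¹ * Λᵀ = 1 := by rw [← hΛt, ← Matrix.transpose_mul, hΛi, Matrix.transpose_one]
  have e1 : ∀ {m : ℕ} (X : Matrix (Fin n) (Fin m) K), Λ * (Λ⁻¹ * X) = X := fun X => by
    rw [← Matrix.mul_assoc, hΛi, Matrix.one_mul]
  have e2 : ∀ {m : ℕ} (X : Matrix (Fin n) (Fin m) K), Λᵀ * ((Λᵀ)⁻¹ * X) = X := fun X => by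
    rw [← Matrix.mul_assoc, hΛti, Matrix.one_mul]
  have huv' : ∀ {m : ℕ} (X : Matrix (Fin r) (Fin m) K), uᵀ * (Λ⁻¹ * (v * X)) = 0 := fun X => by
    rw [← Matrix.mul_assoc, ← Matrix.mul_assoc, huv, Matrix.zero_mul]
  have hvu : vᵀ * (Λᵀ)⁻¹ * u = 0 := by
    have h := congrArg Matrix.transpose huv
    simpa [Matrix.transpose_mul, hΛt, ← Matrix.mul_assoc] using h
  have hvu' : ∀ {m : ℕ} (X : Matrix (Fin r) (Fin m) K), vᵀ * ((Λᵀ)⁻¹ * (u * X)) = 0 := fun X => by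
    rw [← Matrix.mul_assoc, ← Matrix.mul_assoc, hvu, Matrix.zero_mul]
  rw [Matrix.fromBlocks_inj]
  refine ⟨?_, ?_, ?_, ?_⟩ <;>
    simp only [Matrix.transpose_neg, Matrix.transpose_smul, Matrix.transpose_sub,
      Matrix.transpose_mul, Matrix.transpose_transpose, hΛt, hΛtt, hF, hφ, hζ,
      Matrix.mul_add, Matrix.add_mul, Matrix.sub_mul, Matrix.mul_sub,
      Matrix.zero_mul, Matrix.mul_zero, zero_add, add_zero, neg_neg,
      Matrix.mul_neg, Matrix.neg_mul, Matrix.mul_smul, Matrix.smul_mul, smul_neg,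
      neg_zero, zero_sub, sub_zero, Matrix.mul_assoc, e1, e2, hΛi, hΛti, hiΛ, hitΛ, huv, huv', hvu, hvu',
      Matrix.mul_one, Matrix.one_mul, neg_add_rev]
  · have hz : ζ = uᵀ * (Λ⁻¹ * μ) - μᵀ * ((Λᵀ)⁻¹ * u) - uᵀ * (Λ⁻¹ * (φ * ((Λᵀ)⁻¹ * u))) := by
      simp only [Matrix.mul_assoc] at hC2
      rw [← sub_eq_zero, ← hC2]
      abel
    rw [hz]
    match_scalars <;> field_simp <;> ring
  · match_scalars <;> field_simp <;> ring
  · match_scalars <;> field_simp <;> ring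
  · match_scalars <;> field_simp <;> ring
end
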